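/- Let K be a field and let n ≥ 1, m ≥ 1, r ≥ 1 be integers. Let A : Fin m → Matrix (Fin n) (Fin n) K and v : Fin r → (Fin n → K), and assume (A, v) is generating. If g is an invertible n × n matrix over K such that g * A i = A i * g for all i and g.mulVec (v ℓ) = v ℓ for all ℓ, then g = 1. (In other words, the gauge group GL_n acts freely on the set W_{r,n,m} of generating framed tuples.) -/
import Mathlib

/-- A framed tuple `(A, v)`, consisting of `m` matrices `A i` of size `n × n` over `K` and
`r` vectors `v ℓ` in `K^n`, is *generating* if the only `K`-linear subspace `S ⊆ K^n` that
contains all the vectors `v ℓ` and is invariant under multiplication by each matrix `A i`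
is all of `K^n`. -/
def IsGenerating {K : Type*} [Field K] {n m r : ℕ}
    (A : Fin m → Matrix (Fin n) (Fin n) K) (v : Fin r → (Fin n → K)) : Prop :=
  ∀ S : Submodule K (Fin n → K),
    (∀ i : Fin m, ∀ s ∈ S, (A i).mulVec s ∈ S) → (∀ ℓ : Fin r, v ℓ ∈ S) → S = ⊤

/-- The gauge group `GL_n` acts freely on the set `W_{r,n,m}` of generating framed tuples:
if `g` is an invertible `n × n` matrix commuting with each `A i` and fixing each vector
`v ℓ` of a generating tuple `(A, v)`, then `g = 1`. -/
theorem gauge_group_acts_freely_on_generating_tuples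
    {K : Type*} [Field K] {n m r : ℕ} (hn : 1 ≤ n) (hm : 1 ≤ m) (hr : 1 ≤ r)
    (A : Fin m → Matrix (Fin n) (Fin n) K) (v : Fin r → (Fin n → K))
    (hgen : IsGenerating A v)
    (g : Matrix (Fin n) (Fin n) K) (hg : IsUnit g)
    (hcomm : ∀ i : Fin m, g * A i = A i * g)
    (hfix : ∀ ℓ : Fin r, g.mulVec (v ℓ) = v ℓ) :
    g = 1 := by
  set S : Submodule K (Fin n → K) := LinearMap.ker (g.mulVecLin - LinearMap.id) with hS
  have hmem : ∀ x, x ∈ S ↔ g.mulVec x = x := by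
    intro x
    simp [hS, LinearMap.mem_ker, sub_eq_zero]
  have hST : S = ⊤ := by
    apply hgen
    · intro i s hs
      rw [hmem] at hs ⊢
      rw [Matrix.mulVec_mulVec, hcomm i, ← Matrix.mulVec_mulVec, hs]
    · intro ℓ
      rw [hmem]
      exact hfix ℓ
  have : ∀ x, g.mulVec x = x := by
    intro x
    rw [← hmem]
    rw [hST]
    trivial
  ext i j
  have := congrFun (this (Pi.single j 1)) i
  simpa [Matrix.mulVec_single, Matrix.one_apply, Pi.single_apply] using this
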